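/- Let Ω ⊂ ℝᴺ be open and bounded, 0 < s₂ ≤ s₁ < 1, and let (Φ_{x,y}) be a family of Young functions satisfying the uniform index condition 1 < φ⁻ ≤ tφ_{x,y}(t)/Φ_{x,y}(t) ≤ φ⁺ < ∞ and the uniform boundedness condition sup_{(x,y)} Φ_{x,y}(1) < ∞. Then the fractional Musielak–Sobolev space W^{s₁}L_{Φ_{x,y}}(Ω) is continuously embedded in W^{s₂}L_{Φ_{x,y}}(Ω): there exists c > 0 such that ‖u‖_{s₂,Φ} ≤ c ‖u‖_{s₁,Φ} for all u ∈ W^{s₁}L_{Φ_{x,y}}(Ω). -/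

import Mathlib

open Real MeasureTheory ENNReal

/-- The Gagliardo-type modular. -/
noncomputable def fracModular (N : ℕ)
    (Φ : EuclideanSpace ℝ (Fin N) → EuclideanSpace ℝ (Fin N) → ℝ → ℝ) (s : ℝ)
    (Ω : Set (EuclideanSpace ℝ (Fin N))) (u : EuclideanSpace ℝ (Fin N) → ℝ) : ℝ≥0∞ :=
  ∫⁻ x in Ω, ∫⁻ y in Ω,
    ENNReal.ofReal (Φ x y (|u x - u y| / ‖x - y‖ ^ s) / ‖x - y‖ ^ (N : ℝ))

/-- The Gagliardo–Luxemburg seminorm `[u]_{s,Φ}`. -/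
noncomputable def fracSeminorm (N : ℕ)
    (Φ : EuclideanSpace ℝ (Fin N) → EuclideanSpace ℝ (Fin N) → ℝ → ℝ) (s : ℝ)
    (Ω : Set (EuclideanSpace ℝ (Fin N))) (u : EuclideanSpace ℝ (Fin N) → ℝ) : ℝ :=
  sInf {l : ℝ | 0 < l ∧ fracModular N Φ s Ω (fun x => u x / l) ≤ 1}

/-- The Luxemburg norm `‖u‖_{Φ̂_x}` on the Musielak space `L_{Φ̂_x}(Ω)`, `Φ̂_x = Φ_{x,x}`. -/
noncomputable def luxNorm (N : ℕ)
    (Φ : EuclideanSpace ℝ (Fin N) → EuclideanSpace ℝ (Fin N) → ℝ → ℝ)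
    (Ω : Set (EuclideanSpace ℝ (Fin N))) (u : EuclideanSpace ℝ (Fin N) → ℝ) : ℝ :=
  sInf {l : ℝ | 0 < l ∧ (∫⁻ x in Ω, ENNReal.ofReal (Φ x x (|u x| / l))) ≤ 1}

/-- Membership in the fractional Musielak–Sobolev space `W^sL_{Φ_{x,y}}(Ω)`. -/
def memW (N : ℕ)
    (Φ : EuclideanSpace ℝ (Fin N) → EuclideanSpace ℝ (Fin N) → ℝ → ℝ) (s : ℝ)
    (Ω : Set (EuclideanSpace ℝ (Fin N))) (u : EuclideanSpace ℝ (Fin N) → ℝ) : Prop :=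
  Measurable u ∧
    (∃ l : ℝ, 0 < l ∧ (∫⁻ x in Ω, ENNReal.ofReal (Φ x x (|u x| / l))) < ⊤) ∧
    (∃ l : ℝ, 0 < l ∧ fracModular N Φ s Ω (fun x => u x / l) < ⊤)


section AuxYoung
variable {φ Φ : ℝ → ℝ}

lemma auxYoung_phi_nonneg (hm : StrictMono φ) (h0 : φ 0 = 0) {t : ℝ} (ht : 0 ≤ t) : 0 ≤ φ t := by
  rw [← h0]; exact hm.monotone ht

lemma auxYoung_hasDerivAt (hc : Continuous φ)
    (hΦ : ∀ t, Φ t = ∫ τ in (0:ℝ)..t, φ τ) (t : ℝ) : HasDerivAt Φ (φ t) t := by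
  have hfe : Φ = fun u => ∫ τ in (0:ℝ)..u, φ τ := funext hΦ
  rw [hfe]
  exact intervalIntegral.integral_hasDerivAt_right (hc.intervalIntegrable _ _)
    (hc.stronglyMeasurableAtFilter _ _) hc.continuousAt

lemma auxYoung_zero (hΦ : ∀ t, Φ t = ∫ τ in (0:ℝ)..t, φ τ) : Φ 0 = 0 := by
  rw [hΦ 0, intervalIntegral.integral_same]

lemma auxYoung_mono (hm : StrictMono φ) (hc : Continuous φ) (h0 : φ 0 = 0)
    (hΦ : ∀ t, Φ t = ∫ τ in (0:ℝ)..t, φ τ) {a b : ℝ} (ha : 0 ≤ a) (hab : a ≤ b) :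
    Φ a ≤ Φ b := by
  rw [hΦ a, hΦ b,
    ← intervalIntegral.integral_add_adjacent_intervals (hc.intervalIntegrable 0 a)
      (hc.intervalIntegrable a b)]
  have h : 0 ≤ ∫ τ in a..b, φ τ :=
    intervalIntegral.integral_nonneg hab fun u hu => auxYoung_phi_nonneg hm h0 (ha.trans hu.1)
  linarith

lemma auxYoung_nonneg (hm : StrictMono φ) (hc : Continuous φ) (h0 : φ 0 = 0)
    (hΦ : ∀ t, Φ t = ∫ τ in (0:ℝ)..t, φ τ) {t : ℝ} (ht : 0 ≤ t) : 0 ≤ Φ t := by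
  have := auxYoung_mono hm hc h0 hΦ le_rfl ht
  rwa [auxYoung_zero hΦ] at this

lemma auxYoung_pos (hm : StrictMono φ) (hc : Continuous φ) (h0 : φ 0 = 0)
    (hΦ : ∀ t, Φ t = ∫ τ in (0:ℝ)..t, φ τ) {φm : ℝ} (h1 : 1 < φm)
    (hidx : ∀ t, 0 < t → φm ≤ t * φ t / Φ t) {t : ℝ} (ht : 0 < t) : 0 < Φ t := by
  rcases (auxYoung_nonneg hm hc h0 hΦ ht.le).eq_or_lt with h | h
  · exfalso
    have h2 := hidx t ht
    rw [← h, _root_.div_zero] at h2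
    linarith
  · exact h

lemma auxYoung_scale (hm : StrictMono φ) (hc : Continuous φ) (h0 : φ 0 = 0)
    (hΦ : ∀ t, Φ t = ∫ τ in (0:ℝ)..t, φ τ) {φm : ℝ} (h1 : 1 < φm)
    (hidx : ∀ t, 0 < t → φm ≤ t * φ t / Φ t) {l t : ℝ} (hl : 0 < l) (hl1 : l ≤ 1)
    (ht : 0 ≤ t) : Φ (l * t) ≤ l * Φ t := by
  rcases ht.eq_or_lt with h | h
  · rw [← h, mul_zero, auxYoung_zero hΦ, mul_zero]
  · have hΦd : ∀ u, HasDerivAt Φ (φ u) u := auxYoung_hasDerivAt hc hΦ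
    have hΦcont : Continuous Φ := continuous_iff_continuousAt.mpr fun u => (hΦd u).continuousAt
    have hg : ∀ u : ℝ, 0 < u →
        HasDerivAt (fun v => Φ v / v) ((φ u * u - Φ u * 1) / u ^ 2) u := fun u hu =>
      (hΦd u).div (hasDerivAt_id u) (ne_of_gt hu)
    have hgmono : MonotoneOn (fun v => Φ v / v) (Set.Ioi (0:ℝ)) := by
      apply monotoneOn_of_deriv_nonneg (convex_Ioi 0)
      · exact hΦcont.continuousOn.div continuousOn_id fun u hu => ne_of_gt hu
      · intro u hu
        rw [interior_Ioi] at hu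
        exact (hg u hu).differentiableAt.differentiableWithinAt
      · intro u hu
        rw [interior_Ioi] at hu
        rw [(hg u hu).deriv]
        have hΦpos := auxYoung_pos hm hc h0 hΦ h1 hidx hu
        have h2 : φm * Φ u ≤ u * φ u := (le_div_iff₀ hΦpos).mp (hidx u hu)
        have h3 : Φ u ≤ u * φ u := by nlinarith
        apply div_nonneg (by nlinarith) (by positivity)
    have key := hgmono (Set.mem_Ioi.mpr (by positivity : (0:ℝ) < l * t))
      (Set.mem_Ioi.mpr h) (by nlinarith : l * t ≤ t)
    simp only at key
    rw [div_le_div_iff₀ (by positivity) h] at key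
    nlinarith

end AuxYoung

/-- for `Ω ⊂ ℝᴺ` open bounded, `0 < s₂ ≤ s₁ < 1`, under the uniform index
condition `(Φ₁)` and the uniform boundedness condition `(Φ₂)` (`sup Φ_{x,y}(1) < ∞`),
`W^{s₁}L_{Φ_{x,y}}(Ω)` is continuously embedded in `W^{s₂}L_{Φ_{x,y}}(Ω)`. -/
theorem embedding_decreasing_s (N : ℕ)
    (φ Φ : EuclideanSpace ℝ (Fin N) → EuclideanSpace ℝ (Fin N) → ℝ → ℝ)
    (φm φp s₁ s₂ : ℝ) (hs2 : 0 < s₂) (hs21 : s₂ ≤ s₁) (hs1 : s₁ < 1)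
    (Ω : Set (EuclideanSpace ℝ (Fin N))) (hΩo : IsOpen Ω) (hΩb : Bornology.IsBounded Ω)
    (hmono : ∀ x y, StrictMono (φ x y)) (hcont : ∀ x y, Continuous (φ x y))
    (hsurj : ∀ x y, Function.Surjective (φ x y)) (hφ0 : ∀ x y, φ x y 0 = 0)
    (hΦ : ∀ x y t, Φ x y t = ∫ τ in (0:ℝ)..t, φ x y τ)
    (h1 : 1 < φm) (hmp : φm ≤ φp)
    (hidx : ∀ x y t, 0 < t → φm ≤ t * φ x y t / Φ x y t ∧ t * φ x y t / Φ x y t ≤ φp)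
    (hbd : ∃ C : ℝ, ∀ x y, Φ x y 1 ≤ C) :
    ∃ c : ℝ, 0 < c ∧ ∀ u : EuclideanSpace ℝ (Fin N) → ℝ, memW N Φ s₁ Ω u →
      memW N Φ s₂ Ω u ∧
        luxNorm N Φ Ω u + fracSeminorm N Φ s₂ Ω u ≤
          c * (luxNorm N Φ Ω u + fracSeminorm N Φ s₁ Ω u) := by
  classical
  set d : ℝ := Metric.diam Ω with hddef
  set K : ℝ := (max 1 d) ^ (s₁ - s₂) with hKdef
  have hmax1 : (1:ℝ) ≤ max 1 d := le_max_left _ _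
  have hK1 : 1 ≤ K := Real.one_le_rpow hmax1 (by linarith)
  have hK0 : (0:ℝ) < K := lt_of_lt_of_le zero_lt_one hK1
  refine ⟨K, hK0, ?_⟩
  intro u hu
  obtain ⟨humeas, hlu, ⟨l₁, hl₁, hmod⟩⟩ := hu
  -- pointwise comparison of the integrands for s₂ (scaled by K) and s₁
  have hcomp : ∀ l : ℝ, 0 < l → ∀ x ∈ Ω, ∀ y ∈ Ω,
      ENNReal.ofReal (Φ x y (|u x / (K * l) - u y / (K * l)| / ‖x - y‖ ^ s₂) / ‖x - y‖ ^ (N : ℝ))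
        ≤ ENNReal.ofReal
            (Φ x y (|u x / l - u y / l| / ‖x - y‖ ^ s₁) / ‖x - y‖ ^ (N : ℝ)) := by
    intro l hl x hx y hy
    have hKl : (0:ℝ) < K * l := by positivity
    rw [div_sub_div_same, div_sub_div_same, abs_div, abs_div, abs_of_pos hKl, abs_of_pos hl]
    set a := |u x - u y| with hadef
    have ha0 : 0 ≤ a := abs_nonneg _
    set r := ‖x - y‖ with hrdef
    have hr0 : 0 ≤ r := norm_nonneg _
    rcases hr0.eq_or_lt with h | h
    · have h2 : r ^ s₂ = (0:ℝ) := by rw [← h]; exact Real.zero_rpow hs2.ne'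
      rw [h2, _root_.div_zero, auxYoung_zero (hΦ x y), _root_.zero_div, ENNReal.ofReal_zero]
      exact zero_le
    · have hrs2 : (0:ℝ) < r ^ s₂ := Real.rpow_pos_of_pos h _
      have hrK : r ^ (s₁ - s₂) ≤ K := by
        apply Real.rpow_le_rpow hr0 _ (by linarith)
        calc r ≤ d := by
              rw [hrdef, ← dist_eq_norm]; exact Metric.dist_le_diam_of_mem hΩb hx hy
          _ ≤ max 1 d := le_max_right _ _
      have hsplit : r ^ s₁ = r ^ s₂ * r ^ (s₁ - s₂) := by
        rw [← Real.rpow_add h]; ring_nf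
      have harg : a / (K * l) / r ^ s₂ ≤ a / l / r ^ s₁ := by
        rw [div_div, div_div]
        apply div_le_div_of_nonneg_left ha0 (by positivity)
        rw [hsplit]
        nlinarith [mul_nonneg (mul_nonneg hl.le hrs2.le) (sub_nonneg.mpr hrK)]
      have hΦle : Φ x y (a / (K * l) / r ^ s₂) ≤ Φ x y (a / l / r ^ s₁) :=
        auxYoung_mono (hmono x y) (hcont x y) (hφ0 x y) (hΦ x y) (by positivity) harg
      apply ENNReal.ofReal_le_ofReal
      have := mul_le_mul_of_nonneg_right hΦle
        (inv_nonneg.mpr (Real.rpow_nonneg hr0 (N : ℝ)))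
      rwa [← div_eq_mul_inv, ← div_eq_mul_inv] at this
  -- modular comparison
  have hmodle : ∀ l : ℝ, 0 < l →
      fracModular N Φ s₂ Ω (fun x => u x / (K * l)) ≤
        fracModular N Φ s₁ Ω (fun x => u x / l) := by
    intro l hl
    unfold fracModular
    refine setLIntegral_mono' hΩo.measurableSet fun x hx => ?_
    exact setLIntegral_mono' hΩo.measurableSet fun y hy => hcomp l hl x hx y hy
  -- scaling of the modular
  have hscale : ∀ (s l m : ℝ), 0 < l → 1 ≤ m →
      fracModular N Φ s Ω (fun x => u x / (m * l)) ≤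
        ENNReal.ofReal (1 / m) * fracModular N Φ s Ω (fun x => u x / l) := by
    intro s l m hl hm1'
    have hm0 : (0:ℝ) < m := lt_of_lt_of_le zero_lt_one hm1'
    have hpt : ∀ x y : EuclideanSpace ℝ (Fin N),
        ENNReal.ofReal (Φ x y (|u x / (m * l) - u y / (m * l)| / ‖x - y‖ ^ s)
            / ‖x - y‖ ^ (N : ℝ)) ≤
          ENNReal.ofReal (1 / m) *
            ENNReal.ofReal (Φ x y (|u x / l - u y / l| / ‖x - y‖ ^ s)
              / ‖x - y‖ ^ (N : ℝ)) := by
      intro x y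
      have hml : (0:ℝ) < m * l := by positivity
      rw [div_sub_div_same, div_sub_div_same, abs_div, abs_div, abs_of_pos hml, abs_of_pos hl]
      set a := |u x - u y| with hadef
      have ha0 : 0 ≤ a := abs_nonneg _
      set r := ‖x - y‖ with hrdef
      have hr0 : (0:ℝ) ≤ r := norm_nonneg _
      have hid : a / (m * l) / r ^ s = (1 / m) * (a / l / r ^ s) := by
        simp only [div_eq_mul_inv, mul_inv, one_mul]
        ring
      have ht0 : 0 ≤ a / l / r ^ s := by positivity
      rw [hid]
      have hΦs : Φ x y ((1 / m) * (a / l / r ^ s)) ≤ (1 / m) * Φ x y (a / l / r ^ s) :=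
        auxYoung_scale (hmono x y) (hcont x y) (hφ0 x y) (hΦ x y) h1
          (fun t ht => (hidx x y t ht).1) (by positivity)
          (by rw [div_le_one hm0]; exact hm1') ht0
      calc ENNReal.ofReal (Φ x y ((1 / m) * (a / l / r ^ s)) / r ^ (N : ℝ))
          ≤ ENNReal.ofReal ((1 / m) * Φ x y (a / l / r ^ s) / r ^ (N : ℝ)) := by
            apply ENNReal.ofReal_le_ofReal
            have := mul_le_mul_of_nonneg_right hΦs
              (inv_nonneg.mpr (Real.rpow_nonneg hr0 (N : ℝ)))
            rwa [← div_eq_mul_inv, ← div_eq_mul_inv] at this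
        _ = ENNReal.ofReal (1 / m) *
              ENNReal.ofReal (Φ x y (a / l / r ^ s) / r ^ (N : ℝ)) := by
            rw [mul_div_assoc, ENNReal.ofReal_mul (by positivity)]
    have step1 : fracModular N Φ s Ω (fun x => u x / (m * l)) ≤
        ∫⁻ x in Ω, ∫⁻ y in Ω, ENNReal.ofReal (1 / m) *
          ENNReal.ofReal (Φ x y (|u x / l - u y / l| / ‖x - y‖ ^ s) / ‖x - y‖ ^ (N : ℝ)) := by
      unfold fracModular
      exact lintegral_mono fun x => lintegral_mono fun y => hpt x y
    have step2 : (∫⁻ x in Ω, ∫⁻ y in Ω, ENNReal.ofReal (1 / m) *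
          ENNReal.ofReal (Φ x y (|u x / l - u y / l| / ‖x - y‖ ^ s) / ‖x - y‖ ^ (N : ℝ)))
        = ENNReal.ofReal (1 / m) * fracModular N Φ s Ω (fun x => u x / l) := by
      unfold fracModular
      rw [← lintegral_const_mul' (ENNReal.ofReal (1 / m)) _ ENNReal.ofReal_ne_top]
      exact lintegral_congr fun x =>
        lintegral_const_mul' (ENNReal.ofReal (1 / m)) _ ENNReal.ofReal_ne_top
    exact step1.trans step2.le
  -- the admissible sets
  set S₁ : Set ℝ := {l : ℝ | 0 < l ∧ fracModular N Φ s₁ Ω (fun x => u x / l) ≤ 1} with hS₁def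
  set S₂ : Set ℝ := {l : ℝ | 0 < l ∧ fracModular N Φ s₂ Ω (fun x => u x / l) ≤ 1} with hS₂def
  have e1 : fracSeminorm N Φ s₁ Ω u = sInf S₁ := rfl
  have e2 : fracSeminorm N Φ s₂ Ω u = sInf S₂ := rfl
  -- S₁ is nonempty
  set ρ := fracModular N Φ s₁ Ω (fun x => u x / l₁) with hρdef
  set m₀ := max 1 ρ.toReal with hm₀def
  have hm₀1 : (1:ℝ) ≤ m₀ := le_max_left _ _
  have hm₀0 : (0:ℝ) < m₀ := lt_of_lt_of_le zero_lt_one hm₀1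
  have hmem : m₀ * l₁ ∈ S₁ := by
    refine ⟨by positivity, ?_⟩
    calc fracModular N Φ s₁ Ω (fun x => u x / (m₀ * l₁))
        ≤ ENNReal.ofReal (1 / m₀) * ρ := hscale s₁ l₁ m₀ hl₁ hm₀1
      _ = ENNReal.ofReal ((1 / m₀) * ρ.toReal) := by
          rw [ENNReal.ofReal_mul (by positivity), ENNReal.ofReal_toReal hmod.ne]
      _ ≤ 1 := by
          rw [← ENNReal.ofReal_one]
          apply ENNReal.ofReal_le_ofReal
          rw [div_mul_eq_mul_div, one_mul, div_le_one hm₀0]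
          exact le_max_right _ _
  have hS₁ne : S₁.Nonempty := ⟨m₀ * l₁, hmem⟩
  have hbdd₂ : BddBelow S₂ := ⟨0, fun x hx => hx.1.le⟩
  have hKmem : ∀ l ∈ S₁, K * l ∈ S₂ := fun l hl =>
    ⟨by have := hl.1; positivity, (hmodle l hl.1).trans hl.2⟩
  constructor
  · exact ⟨humeas, hlu, ⟨K * l₁, by positivity, lt_of_le_of_lt (hmodle l₁ hl₁) hmod⟩⟩
  · have hlux0 : 0 ≤ luxNorm N Φ Ω u := Real.sInf_nonneg fun x hx => hx.1.le
    have hsem : sInf S₂ ≤ K * sInf S₁ := by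
      have h1' : ∀ l ∈ S₁, sInf S₂ ≤ K * l := fun l hl => csInf_le hbdd₂ (hKmem l hl)
      have h2 : sInf S₂ / K ≤ sInf S₁ :=
        le_csInf hS₁ne fun b hb => (div_le_iff₀ hK0).mpr (by rw [mul_comm]; exact h1' b hb)
      have := (div_le_iff₀ hK0).mp h2
      linarith
    rw [e1, e2, mul_add]
    have hlK : luxNorm N Φ Ω u ≤ K * luxNorm N Φ Ω u := le_mul_of_one_le_left hlux0 hK1
    linarith
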